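/- For every valid non-final configuration c and every action τ' that is applicable at c but with τ' ∉ dyna(c), the optimal tree changes: t*(τ'(c)) ≠ t*(c). (Lemma 3, second part.) -/

import Mathlib

/-!
Formalization of the span-based Structure/Label transition parsing system of
Cross & Huang (2016), "Span-Based Constituency Parsing with a Structure-Label
System and Provably Optimal Dynamic Oracles".

A configuration is `(z, σ, t)` where `z` is the step number, `σ` the stack of
span boundaries and `t` the set of brackets built so far.  A bracket is a
triple `(X, i, j)` with `X` a nonterminal label and `i < j ≤ n` a span.
-/

namespace SpanParser

structure Config (N : Type*) where
  z : ℕ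
  σ : List ℕ
  t : Finset (N × ℕ × ℕ)

variable {N : Type*}

/-- The span of a bracket. -/
def span (b : N × ℕ × ℕ) : ℕ × ℕ := b.2

/-- Top (rightmost) boundary of the stack. -/
def topJ (σ : List ℕ) : ℕ := σ.getLastD 0

/-- Second-to-top boundary of the stack. -/
def topI (σ : List ℕ) : ℕ := σ.dropLast.getLastD 0

/-- Parser actions: shift, combine, label-`X`, and nolabel. -/
inductive Action (N : Type*) where
  | sh : Action N
  | comb : Action N
  | label : N → Action N
  | nolabel : Action N

variable [DecidableEq N]

/-- Applicability of an action at a configuration (for sentence length `n`). -/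
def App (n : ℕ) (c : Config N) : Action N → Prop
  | .sh      => Even c.z ∧ c.σ ≠ [] ∧ topJ c.σ < n
  | .comb    => Even c.z ∧ 3 ≤ c.σ.length
  | .label _ => Odd c.z ∧ 2 ≤ c.σ.length
  | .nolabel => Odd c.z ∧ 2 ≤ c.σ.length ∧ c.z < 4 * n - 1

/-- The result `τ(c)` of applying action `τ` to configuration `c`. -/
def doAct (c : Config N) : Action N → Config N
  | .sh      => ⟨c.z + 1, c.σ ++ [topJ c.σ + 1], c.t⟩
  | .comb    => ⟨c.z + 1, c.σ.dropLast.dropLast ++ [topJ c.σ], c.t⟩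
  | .label X => ⟨c.z + 1, c.σ, insert (X, topI c.σ, topJ c.σ) c.t⟩
  | .nolabel => ⟨c.z + 1, c.σ, c.t⟩

/-- The initial configuration `(0, [0], ∅)`. -/
def initial (N : Type*) : Config N := ⟨0, [0], ∅⟩

/-- One transition step `c ⊢ c'`. -/
def Step (n : ℕ) (c c' : Config N) : Prop := ∃ a, App n c a ∧ c' = doAct c a

/-- `⊢*`: reflexive-transitive closure of the transition relation. -/
def Reaches (n : ℕ) : Config N → Config N → Prop := Relation.ReflTransGen (Step n)

/-- A configuration is valid if it is reachable from the initial configuration. -/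
def Valid (n : ℕ) (c : Config N) : Prop := Reaches n (initial N) c

/-- A final configuration: `σ = [0, n]` and `z = 4n - 2`. -/
def Final (n : ℕ) (c : Config N) : Prop := c.σ = [0, n] ∧ c.z = 4 * n - 2

/-- `D(c)`: the set of trees of final configurations reachable from `c`. -/
def Dset (n : ℕ) (c : Config N) : Set (Finset (N × ℕ × ℕ)) :=
  {t' | ∃ c', Reaches n c c' ∧ Final n c' ∧ c'.t = t'}

/-- `(i,j) ⪯ (p,q)`: span `(i,j)` is encompassed by `(p,q)`, i.e. `p ≤ i < j ≤ q`. -/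
def Enc (s₁ s₂ : ℕ × ℕ) : Prop := s₂.1 ≤ s₁.1 ∧ s₁.1 < s₁.2 ∧ s₁.2 ≤ s₂.2

/-- `(i,j) ≺ (p,q)`: strict encompassment. -/
def SEnc (s₁ s₂ : ℕ × ℕ) : Prop := Enc s₁ s₂ ∧ s₁ ≠ s₂

/-- `tG` is a gold tree for sentence length `n`: valid spans, pairwise-distinct
spans, pairwise non-crossing spans, and exactly one bracket with span `(0, n)`
(uniqueness follows from distinctness of spans). -/
structure IsGold (n : ℕ) (tG : Finset (N × ℕ × ℕ)) : Prop where
  validSpans : ∀ b ∈ tG, (span b).1 < (span b).2 ∧ (span b).2 ≤ n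
  distinctSpans : ∀ b₁ ∈ tG, ∀ b₂ ∈ tG, span b₁ = span b₂ → b₁ = b₂
  noncrossing : ∀ b₁ ∈ tG, ∀ b₂ ∈ tG,
    Enc (span b₁) (span b₂) ∨ Enc (span b₂) (span b₁) ∨
    (span b₁).2 ≤ (span b₂).1 ∨ (span b₂).2 ≤ (span b₁).1
  root : ∃ X, (X, 0, n) ∈ tG

open Classical in
/-- `left(c)`: gold brackets (strictly, at even steps) encompassing the top
span whose left boundary occurs on the stack. -/
noncomputable def leftSet (tG : Finset (N × ℕ × ℕ)) (c : Config N) :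
    Finset (N × ℕ × ℕ) :=
  tG.filter fun b =>
    (if Even c.z then SEnc (topI c.σ, topJ c.σ) (span b)
     else Enc (topI c.σ, topJ c.σ) (span b)) ∧ (span b).1 ∈ c.σ

open Classical in
/-- `right(c)`: gold brackets entirely on the queue. -/
noncomputable def rightSet (tG : Finset (N × ℕ × ℕ)) (c : Config N) :
    Finset (N × ℕ × ℕ) :=
  tG.filter fun b => topJ c.σ ≤ (span b).1

open Classical in
/-- `reach(c)`: the reachable gold brackets (all of `t_G` at the initial
configuration, whose stack has fewer than two boundaries). -/
noncomputable def reach (tG : Finset (N × ℕ × ℕ)) (c : Config N) :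
    Finset (N × ℕ × ℕ) :=
  if c.σ.length < 2 then tG else leftSet tG c ∪ rightSet tG c

/-- The optimal tree `t*(c) = t ∪ reach(c)`. -/
noncomputable def tstar (tG : Finset (N × ℕ × ℕ)) (c : Config N) :
    Finset (N × ℕ × ℕ) :=
  c.t ∪ reach tG c

/-- `b = next(c)`: the `≺`-minimal element of `left(c)`. -/
def IsNext (tG : Finset (N × ℕ × ℕ)) (c : Config N) (b : N × ℕ × ℕ) : Prop :=
  b ∈ leftSet tG c ∧ ∀ b' ∈ leftSet tG c, Enc (span b) (span b')

/-- The dynamic-oracle policy `dyna(c)` as a predicate on actions. -/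
def Dyna (tG : Finset (N × ℕ × ℕ)) (c : Config N) (a : Action N) : Prop :=
  if c.σ.length < 2 then a = Action.sh
  else if Even c.z then
    ∃ b, IsNext tG c b ∧
      (((span b).1 = topI c.σ ∧ topJ c.σ < (span b).2 ∧ a = Action.sh) ∨
       ((span b).1 < topI c.σ ∧ (span b).2 = topJ c.σ ∧ a = Action.comb) ∨
       ((span b).1 < topI c.σ ∧ topJ c.σ < (span b).2 ∧
          (a = Action.sh ∨ a = Action.comb)))
  else
    (∃ X, (X, topI c.σ, topJ c.σ) ∈ tG ∧ a = Action.label X) ∨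
    ((∀ X, (X, topI c.σ, topJ c.σ) ∉ tG) ∧ a = Action.nolabel)

/-- `F1` of a predicted bracket set `t'` against the gold tree `tG`
(`0` when `t' ∩ tG = ∅`). -/
noncomputable def f1 (tG t' : Finset (N × ℕ × ℕ)) : ℝ :=
  if t' ∩ tG = ∅ then 0
  else
    (2 * (((t' ∩ tG).card : ℝ) / (tG.card : ℝ)) * (((t' ∩ tG).card : ℝ) / (t'.card : ℝ))) /
      ((((t' ∩ tG).card : ℝ) / (tG.card : ℝ)) + (((t' ∩ tG).card : ℝ) / (t'.card : ℝ)))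

/-- `F1(c)`: the best `F1` among trees reachable from `c`. -/
noncomputable def configF1 (n : ℕ) (tG : Finset (N × ℕ × ℕ)) (c : Config N) : ℝ :=
  sSup (f1 tG '' Dset n c)

/-- A run of (applicable) actions from one configuration to another. -/
inductive Run (n : ℕ) : Config N → List (Action N) → Config N → Prop
  | refl (c : Config N) : Run n c [] c
  | step {c c' : Config N} {as : List (Action N)} (a : Action N)
      (happ : App n c a) (h : Run n (doAct c a) as c') : Run n c (a :: as) c'

/-- A run all of whose actions follow the dynamic oracle. -/
inductive DynaRun (n : ℕ) (tG : Finset (N × ℕ × ℕ)) : Config N → Config N → Prop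
  | refl (c : Config N) : DynaRun n tG c c
  | step {c c' : Config N} (a : Action N) (happ : App n c a) (hdyna : Dyna tG c a)
      (h : DynaRun n tG (doAct c a) c') : DynaRun n tG c c'

def isSh : Action N → Bool
  | .sh => true
  | _ => false

def isComb : Action N → Bool
  | .comb => true
  | _ => false

/-- Label-step actions: `label-X` or `nolabel`. -/
def isLabelStep : Action N → Bool
  | .label _ => true
  | .nolabel => true
  | _ => false

end SpanParser

/-!
Every action preserves the following invariant: every built bracket ends at or before the
top boundary `j`, starts at or after `i` if it ends at `j`, and at odd steps, before the top
span has been labelled, is not `(i, j)` itself.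

Against it each non-oracle action visibly changes `t*`. A wrong `label-X` adds the non-gold
bracket `(X, i, j)` to `t`. A wrong `nolabel` drops the gold bracket on `(i, j)` from `reach`.
At even steps `next(c)` exists because the root bracket lies in `left(c)`; a wrong `sh` means
that `next(c)` ends at `j`, a wrong `comb` that it starts at `i`, and in both cases the new top
span is no longer encompassed by it, so `next(c)` leaves `reach`.
-/

namespace SpanParser

variable {N : Type*}

section Stack

variable {σ : List ℕ}

@[simp] lemma topJ_append_singleton (x : ℕ) : topJ (σ ++ [x]) = x := by
  simp [topJ]

@[simp] lemma topI_append_singleton (x : ℕ) : topI (σ ++ [x]) = topJ σ := by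
  simp [topI, topJ]

lemma exists_eq_append_pair {α : Type*} {l : List α} (hl : 2 ≤ l.length) :
    ∃ l' x y, l = l' ++ [x, y] := by
  obtain ⟨x, y, h⟩ := List.length_eq_two.mp
    (show (l.drop (l.length - 2)).length = 2 by rw [List.length_drop]; omega)
  exact ⟨l.take (l.length - 2), x, y, by rw [← h, List.take_append_drop]⟩

lemma exists_eq_append_triple {α : Type*} {l : List α} (hl : 3 ≤ l.length) :
    ∃ l' x y z, l = l' ++ [x, y, z] := by
  obtain ⟨x, y, z, h⟩ := List.length_eq_three.mp
    (show (l.drop (l.length - 3)).length = 3 by rw [List.length_drop]; omega)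
  exact ⟨l.take (l.length - 3), x, y, z, by rw [← h, List.take_append_drop]⟩

lemma topI_mem (hl : 2 ≤ σ.length) : topI σ ∈ σ := by
  obtain ⟨l, x, y, rfl⟩ := exists_eq_append_pair hl
  simp [topI]

lemma topI_lt_topJ (hs : σ.Pairwise (· < ·)) (hl : 2 ≤ σ.length) : topI σ < topJ σ := by
  obtain ⟨l, x, y, rfl⟩ := exists_eq_append_pair hl
  simp_all [topI, topJ, List.pairwise_append]

lemma le_topJ_of_mem (hs : σ.Pairwise (· < ·)) {x : ℕ} (hx : x ∈ σ) : x ≤ topJ σ := by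
  obtain ⟨l, y, rfl⟩ := (List.eq_nil_or_concat' σ).resolve_left (List.ne_nil_of_mem hx)
  simp only [List.pairwise_append, List.mem_singleton] at hs
  rcases List.mem_append.mp hx with hx | hx
  · simpa using (hs.2.2 x hx y rfl).le
  · simp_all

lemma topJ_dropLast_dropLast_lt_topI (hs : σ.Pairwise (· < ·)) (hl : 3 ≤ σ.length) :
    topJ σ.dropLast.dropLast < topI σ := by
  obtain ⟨l, x, y, z, rfl⟩ := exists_eq_append_triple hl
  simp_all [topI, topJ, List.pairwise_append]

lemma pairwise_comb (hs : σ.Pairwise (· < ·)) (hl : 3 ≤ σ.length) :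
    (σ.dropLast.dropLast ++ [topJ σ]).Pairwise (· < ·) := by
  obtain ⟨l, x, y, z, rfl⟩ := exists_eq_append_triple hl
  refine hs.sublist ?_
  simp [topJ]

lemma head?_comb (hl : 3 ≤ σ.length) : (σ.dropLast.dropLast ++ [topJ σ]).head? = σ.head? := by
  obtain ⟨l, x, y, z, rfl⟩ := exists_eq_append_triple hl
  simp [topJ]

end Stack

structure Invariant (n : ℕ) (c : Config N) : Prop where
  head?_eq : c.σ.head? = some 0
  pairwise : c.σ.Pairwise (· < ·)
  topJ_le : topJ c.σ ≤ n
  snd_le : ∀ b ∈ c.t, (span b).2 ≤ topJ c.σ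
  topI_le_fst : ∀ b ∈ c.t, (span b).2 = topJ c.σ → topI c.σ ≤ (span b).1
  span_ne_of_odd : Odd c.z → ∀ b ∈ c.t, span b ≠ (topI c.σ, topJ c.σ)

namespace Invariant

variable {n : ℕ} {c : Config N}

lemma initial : Invariant n (initial N) where
  head?_eq := rfl
  pairwise := List.pairwise_singleton _ _
  topJ_le := by simp [SpanParser.initial, topJ]
  snd_le := by simp [SpanParser.initial]
  topI_le_fst := by simp [SpanParser.initial]
  span_ne_of_odd := by simp [SpanParser.initial]

lemma zero_mem (hi : Invariant n c) : 0 ∈ c.σ :=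
  List.mem_of_mem_head? hi.head?_eq

variable [DecidableEq N]

lemma doAct_sh (hi : Invariant n c) (hj : topJ c.σ < n) : Invariant n (doAct c .sh) where
  head?_eq := by
    simp [doAct, List.head?_append, hi.head?_eq]
  pairwise := List.pairwise_append.2 ⟨hi.pairwise, List.pairwise_singleton _ _,
    fun x hx y hy => by
      rw [List.mem_singleton.1 hy]; exact Nat.lt_succ_of_le (le_topJ_of_mem hi.pairwise hx)⟩
  topJ_le := by simpa [doAct] using hj
  snd_le b hb := by simpa [doAct] using (hi.snd_le b hb).trans (Nat.le_succ _)
  topI_le_fst b hb h := by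
    have := hi.snd_le b hb
    simp only [doAct, topJ_append_singleton] at h
    omega
  span_ne_of_odd _ b hb h := by
    have := hi.snd_le b hb
    simp only [doAct, topJ_append_singleton, Prod.ext_iff] at h
    omega

lemma doAct_comb (hi : Invariant n c) (hl : 3 ≤ c.σ.length) : Invariant n (doAct c .comb) where
  head?_eq := by simpa [doAct, head?_comb hl] using hi.head?_eq
  pairwise := pairwise_comb hi.pairwise hl
  topJ_le := by simpa [doAct] using hi.topJ_le
  snd_le b hb := by simpa [doAct] using hi.snd_le b hb
  topI_le_fst b hb h := by
    simp only [doAct, topJ_append_singleton, topI_append_singleton] at h hb ⊢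
    exact (topJ_dropLast_dropLast_lt_topI hi.pairwise hl).le.trans (hi.topI_le_fst b hb h)
  span_ne_of_odd _ b hb h := by
    simp only [doAct, topJ_append_singleton, topI_append_singleton, Prod.ext_iff] at h hb
    have := hi.topI_le_fst b hb h.2
    have := topJ_dropLast_dropLast_lt_topI hi.pairwise hl
    omega

lemma doAct_label (hi : Invariant n c) (hz : Odd c.z) (X : N) :
    Invariant n (doAct c (.label X)) where
  head?_eq := hi.head?_eq
  pairwise := hi.pairwise
  topJ_le := hi.topJ_le
  snd_le b hb := by
    rcases Finset.mem_insert.1 hb with rfl | hb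
    exacts [le_rfl, hi.snd_le b hb]
  topI_le_fst b hb := by
    rcases Finset.mem_insert.1 hb with rfl | hb
    exacts [fun _ => le_rfl, hi.topI_le_fst b hb]
  span_ne_of_odd h := absurd hz (by simpa [doAct, Nat.odd_add_one] using h)

lemma doAct_nolabel (hi : Invariant n c) (hz : Odd c.z) : Invariant n (doAct c .nolabel) where
  head?_eq := hi.head?_eq
  pairwise := hi.pairwise
  topJ_le := hi.topJ_le
  snd_le := hi.snd_le
  topI_le_fst := hi.topI_le_fst
  span_ne_of_odd h := absurd hz (by simpa [doAct, Nat.odd_add_one] using h)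

lemma doAct (hi : Invariant n c) {a : Action N} (ha : App n c a) : Invariant n (doAct c a) :=
  match a, ha with
  | .sh, ha => hi.doAct_sh ha.2.2
  | .comb, ha => hi.doAct_comb ha.2
  | .label X, ha => hi.doAct_label ha.1 X
  | .nolabel, ha => hi.doAct_nolabel ha.1

lemma of_valid (hc : Valid n c) : Invariant n c := by
  induction hc with
  | refl => exact initial
  | tail _ hstep ih =>
    obtain ⟨a, ha, rfl⟩ := hstep
    exact ih.doAct ha

end Invariant

section Trees

variable {n : ℕ} {tG : Finset (N × ℕ × ℕ)} {c : Config N} {b : N × ℕ × ℕ}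

lemma mem_leftSet_of_even (hz : Even c.z) :
    b ∈ leftSet tG c ↔ b ∈ tG ∧ SEnc (topI c.σ, topJ c.σ) (span b) ∧ (span b).1 ∈ c.σ := by
  simp [leftSet, hz]

lemma mem_leftSet_of_odd (hz : Odd c.z) :
    b ∈ leftSet tG c ↔ b ∈ tG ∧ Enc (topI c.σ, topJ c.σ) (span b) ∧ (span b).1 ∈ c.σ := by
  simp [leftSet, Nat.not_even_iff_odd.2 hz]

lemma enc_of_mem_leftSet (hb : b ∈ leftSet tG c) : Enc (topI c.σ, topJ c.σ) (span b) := by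
  rcases Nat.even_or_odd c.z with hz | hz
  exacts [((mem_leftSet_of_even hz).1 hb).2.1.1, ((mem_leftSet_of_odd hz).1 hb).2.1]

lemma mem_of_mem_leftSet (hb : b ∈ leftSet tG c) : b ∈ tG := by
  classical exact (Finset.mem_filter.1 hb).1

lemma mem_rightSet : b ∈ rightSet tG c ↔ b ∈ tG ∧ topJ c.σ ≤ (span b).1 := by
  simp [rightSet]

variable [DecidableEq N]

lemma reach_subset : reach tG c ⊆ tG := by
  unfold reach
  split_ifs
  · exact subset_rfl
  · intro b hb
    simp only [Finset.mem_union, leftSet, rightSet, Finset.mem_filter] at hb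
    tauto

lemma mem_tstar (hl : 2 ≤ c.σ.length) :
    b ∈ tstar tG c ↔ b ∈ c.t ∨ b ∈ leftSet tG c ∨ b ∈ rightSet tG c := by
  simp [tstar, reach, show ¬ c.σ.length < 2 by omega]

end Trees

section Oracle

variable {n : ℕ} {tG : Finset (N × ℕ × ℕ)} {c : Config N} {b : N × ℕ × ℕ}

lemma IsGold.enc_or_enc (hG : IsGold n tG) {b₁ b₂ : N × ℕ × ℕ} (h₁ : b₁ ∈ tG) (h₂ : b₂ ∈ tG)
    {s : ℕ × ℕ} (e₁ : Enc s (span b₁)) (e₂ : Enc s (span b₂)) :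
    Enc (span b₁) (span b₂) ∨ Enc (span b₂) (span b₁) := by
  unfold Enc at e₁ e₂
  rcases hG.noncrossing b₁ h₁ b₂ h₂ with h | h | h | h
  · exact Or.inl h
  · exact Or.inr h
  · omega
  · omega

/-- A narrowest bracket of `left(c)` is `next(c)`, since gold brackets encompassing a common
span are nested. -/
lemma IsGold.exists_isNext (hG : IsGold n tG) (hne : (leftSet tG c).Nonempty) :
    ∃ b, IsNext tG c b := by
  obtain ⟨b, hb, hmin⟩ := Finset.exists_min_image (leftSet tG c)
    (fun b => (span b).2 - (span b).1) hne
  refine ⟨b, hb, fun b' hb' => ?_⟩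
  have hbG : b ∈ tG := mem_of_mem_leftSet hb
  have hbG' : b' ∈ tG := mem_of_mem_leftSet hb'
  rcases hG.enc_or_enc hbG hbG' (enc_of_mem_leftSet hb) (enc_of_mem_leftSet hb') with h | h
  · exact h
  · have := hmin b' hb'
    have := (hG.validSpans b hbG).1
    unfold Enc at h ⊢
    omega

lemma root_mem_leftSet (hi : Invariant n c) (hz : Even c.z) (hl : 2 ≤ c.σ.length) {X : N}
    (hroot : (X, 0, n) ∈ tG) (hne : 0 < topI c.σ ∨ topJ c.σ < n) : (X, 0, n) ∈ leftSet tG c := by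
  have := topI_lt_topJ hi.pairwise hl
  have := hi.topJ_le
  refine (mem_leftSet_of_even hz).2 ⟨hroot, ⟨?_, ?_⟩, hi.zero_mem⟩
  · simp only [Enc, span]
    omega
  · simp only [span, ne_eq, Prod.mk.injEq]
    omega

lemma dyna_iff_of_odd (hl : 2 ≤ c.σ.length) (hz : Odd c.z) {a : Action N} :
    Dyna tG c a ↔ (∃ X, (X, topI c.σ, topJ c.σ) ∈ tG ∧ a = .label X) ∨
      ((∀ X, (X, topI c.σ, topJ c.σ) ∉ tG) ∧ a = .nolabel) := by
  rw [Dyna, if_neg (by omega), if_neg (Nat.not_even_iff_odd.2 hz)]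

lemma span_snd_eq_of_not_dyna_sh (hl : 2 ≤ c.σ.length) (hz : Even c.z) (hb : IsNext tG c b)
    (h : ¬ Dyna tG c .sh) : (span b).2 = topJ c.σ := by
  obtain ⟨⟨hp, -, hq⟩, -⟩ := ((mem_leftSet_of_even hz).1 hb.1).2.1
  dsimp only at hp hq
  by_contra hq'
  refine h ?_
  rw [Dyna, if_neg (by omega), if_pos hz]
  refine ⟨b, hb, ?_⟩
  rcases hp.eq_or_lt with hp | hp
  · exact Or.inl ⟨hp, by omega, rfl⟩
  · exact Or.inr (Or.inr ⟨hp, by omega, Or.inl rfl⟩)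

lemma span_fst_eq_of_not_dyna_comb (hl : 2 ≤ c.σ.length) (hz : Even c.z) (hb : IsNext tG c b)
    (h : ¬ Dyna tG c .comb) : (span b).1 = topI c.σ := by
  obtain ⟨⟨hp, -, hq⟩, -⟩ := ((mem_leftSet_of_even hz).1 hb.1).2.1
  dsimp only at hp hq
  by_contra hp'
  refine h ?_
  rw [Dyna, if_neg (by omega), if_pos hz]
  refine ⟨b, hb, ?_⟩
  rcases hq.eq_or_lt with hq | hq
  · exact Or.inr (Or.inl ⟨by omega, hq.symm, rfl⟩)
  · exact Or.inr (Or.inr ⟨by omega, hq, Or.inr rfl⟩)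

end Oracle

section Deviation

variable [DecidableEq N] {n : ℕ} {tG : Finset (N × ℕ × ℕ)} {c : Config N}

lemma tstar_doAct_label_ne (hi : Invariant n c) (hz : Odd c.z) {X : N}
    (hX : (X, topI c.σ, topJ c.σ) ∉ tG) : tstar tG (doAct c (.label X)) ≠ tstar tG c := by
  refine ne_of_mem_of_not_mem' (Finset.mem_union_left _ (Finset.mem_insert_self _ _)) ?_
  intro hmem
  rcases Finset.mem_union.1 hmem with ht | hr
  · exact hi.span_ne_of_odd hz _ ht rfl
  · exact hX (reach_subset hr)

lemma tstar_doAct_nolabel_ne (hi : Invariant n c) (hz : Odd c.z) (hl : 2 ≤ c.σ.length) {X : N}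
    (hX : (X, topI c.σ, topJ c.σ) ∈ tG) : tstar tG (doAct c .nolabel) ≠ tstar tG c := by
  have hij := topI_lt_topJ hi.pairwise hl
  have hz' : Even (doAct c .nolabel).z := hz.add_one
  have hleft : (X, topI c.σ, topJ c.σ) ∈ leftSet tG c :=
    (mem_leftSet_of_odd hz).2 ⟨hX, ⟨le_rfl, hij, le_rfl⟩, topI_mem hl⟩
  refine (ne_of_mem_of_not_mem' ((mem_tstar hl).2 (Or.inr (Or.inl hleft))) ?_).symm
  rw [mem_tstar (c := doAct c .nolabel) hl]
  rintro (ht | hleft' | hright)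
  · exact hi.span_ne_of_odd hz _ ht rfl
  · exact ((mem_leftSet_of_even hz').1 hleft').2.1.2 rfl
  · exact absurd (mem_rightSet.1 hright).2 (by simpa [doAct, span] using hij)

lemma tstar_doAct_sh_ne (hi : Invariant n c) (hz : Even c.z) (hl : 2 ≤ c.σ.length)
    {b : N × ℕ × ℕ} (hb : b ∈ leftSet tG c) (hq : (span b).2 = topJ c.σ) :
    tstar tG (doAct c .sh) ≠ tstar tG c := by
  have hij := topI_lt_topJ hi.pairwise hl
  obtain ⟨-, ⟨⟨hp, -, -⟩, hne⟩, -⟩ := (mem_leftSet_of_even hz).1 hb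
  have hp : (span b).1 < topI c.σ := by
    simp only [ne_eq, Prod.ext_iff, not_and] at hp hne
    omega
  refine (ne_of_mem_of_not_mem' ((mem_tstar hl).2 (Or.inr (Or.inl hb))) ?_).symm
  rw [mem_tstar (by simp only [doAct, List.length_append, List.length_singleton]; omega)]
  rintro (ht | hleft | hright)
  · exact absurd (hi.topI_le_fst b ht hq) (not_le.2 hp)
  · have := (enc_of_mem_leftSet hleft).2.2
    simp only [doAct, topJ_append_singleton] at this
    omega
  · have := (mem_rightSet.1 hright).2
    simp only [doAct, topJ_append_singleton] at this
    omega

lemma tstar_doAct_comb_ne (hi : Invariant n c) (hz : Even c.z) (hl : 3 ≤ c.σ.length)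
    {b : N × ℕ × ℕ} (hb : b ∈ leftSet tG c) (hp : (span b).1 = topI c.σ) :
    tstar tG (doAct c .comb) ≠ tstar tG c := by
  have hij := topI_lt_topJ hi.pairwise (by omega)
  have hki := topJ_dropLast_dropLast_lt_topI hi.pairwise hl
  obtain ⟨-, ⟨⟨-, -, hq⟩, hne⟩, -⟩ := (mem_leftSet_of_even hz).1 hb
  have hq : topJ c.σ < (span b).2 := by
    simp only [ne_eq, Prod.ext_iff, not_and] at hq hne
    omega
  refine (ne_of_mem_of_not_mem' ((mem_tstar (by omega)).2 (Or.inr (Or.inl hb))) ?_).symm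
  rw [mem_tstar (by
    simp only [doAct, List.length_append, List.length_dropLast, List.length_singleton]; omega)]
  rintro (ht | hleft | hright)
  · exact absurd (hi.snd_le b ht) (not_le.2 hq)
  · have := (enc_of_mem_leftSet hleft).1
    simp only [doAct, topI_append_singleton] at this
    omega
  · have := (mem_rightSet.1 hright).2
    simp only [doAct, topJ_append_singleton] at this
    omega

end Deviation

variable [DecidableEq N]

theorem tstar_changed_by_nondyna_general (n : ℕ) (tG : Finset (N × ℕ × ℕ))
    (hG : IsGold n tG) (c : Config N) (hc : Valid n c)
    (a : Action N) (happ : App n c a) (hna : ¬ Dyna tG c a) :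
    tstar tG (doAct c a) ≠ tstar tG c := by
  have hi := Invariant.of_valid hc
  obtain ⟨_, hroot⟩ := hG.root
  cases a with
  | label X =>
    obtain ⟨hz, hl⟩ := happ
    exact tstar_doAct_label_ne hi hz fun hX => hna ((dyna_iff_of_odd hl hz).2 (.inl ⟨X, hX, rfl⟩))
  | nolabel =>
    obtain ⟨hz, hl, -⟩ := happ
    obtain ⟨X, hX⟩ : ∃ X, (X, topI c.σ, topJ c.σ) ∈ tG := by
      by_contra! h
      exact hna ((dyna_iff_of_odd hl hz).2 (.inr ⟨h, rfl⟩))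
    exact tstar_doAct_nolabel_ne hi hz hl hX
  | sh =>
    obtain ⟨hz, -, hj⟩ := happ
    have hl : 2 ≤ c.σ.length := by
      by_contra h
      exact hna (by rw [Dyna, if_pos (by omega)])
    obtain ⟨b, hb⟩ := hG.exists_isNext ⟨_, root_mem_leftSet hi hz hl hroot (.inr hj)⟩
    exact tstar_doAct_sh_ne hi hz hl hb.1 (span_snd_eq_of_not_dyna_sh hl hz hb hna)
  | comb =>
    obtain ⟨hz, hl⟩ := happ
    have hi0 : 0 < topI c.σ :=
      (Nat.zero_le _).trans_lt (topJ_dropLast_dropLast_lt_topI hi.pairwise hl)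
    obtain ⟨b, hb⟩ := hG.exists_isNext ⟨_, root_mem_leftSet hi hz (by omega) hroot (.inl hi0)⟩
    exact tstar_doAct_comb_ne hi hz hl hb.1 (span_fst_eq_of_not_dyna_comb (by omega) hz hb hna)

/-- Lemma 3, second part: any applicable non-oracle action changes the
optimal tree: `t*(τ'(c)) ≠ t*(c)`. -/
theorem tstar_changed_by_nondyna (n : ℕ) (hn : 1 ≤ n) (tG : Finset (N × ℕ × ℕ))
    (hG : IsGold n tG) (c : Config N) (hc : Valid n c) (hnf : ¬ Final n c)
    (a : Action N) (happ : App n c a) (hna : ¬ Dyna tG c a) :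
    tstar tG (doAct c a) ≠ tstar tG c :=
  tstar_changed_by_nondyna_general n tG hG c hc a happ hna

end SpanParser
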